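/- Let N be a nonnegative integer, |q| < 1, and let a be a complex number with $a \neq 1$ and such that $(aq^{-N};q)_N \neq 0$. Then $\sum_{i=0}^{N} \frac{(aq; q)_i (q^{-N}; q)_i}{(q; q)_i (a q^{-N}; q)_i} = \frac{1 - a^{N+1}}{1 - a} \cdot \frac{(q^{-N}; q)_N}{(a q^{-N}; q)_N}$. -/

import Mathlib

open Finset

noncomputable def qPoch (a q : ℂ) (n : ℕ) : ℂ := ∏ j ∈ Finset.range n, (1 - a * q ^ j)

noncomputable def qPochInf (a q : ℂ) : ℂ := ∏' j : ℕ, (1 - a * q ^ j)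

noncomputable def phi (a b c q x : ℂ) : ℂ :=
  ∑' i : ℕ, qPoch a q i * qPoch b q i / (qPoch q q i * qPoch c q i) * x ^ i

noncomputable def Pprod (a q : ℂ) (m : ℕ) : ℂ := ∏ j ∈ Finset.range m, (a - q ^ (j + 1))

noncomputable def Bq (q : ℂ) (n k : ℕ) : ℂ :=
  if k ≤ n then qPoch q q n / (qPoch q q k * qPoch q q (n - k)) else 0

lemma qPoch_zero (a q : ℂ) : qPoch a q 0 = 1 := by simp [qPoch]

lemma qPoch_succ (a q : ℂ) (n : ℕ) : qPoch a q (n + 1) = qPoch a q n * (1 - a * q ^ n) :=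
  Finset.prod_range_succ _ n

lemma Pprod_zero (a q : ℂ) : Pprod a q 0 = 1 := by simp [Pprod]

lemma Pprod_succ (a q : ℂ) (m : ℕ) : Pprod a q (m + 1) = Pprod a q m * (a - q ^ (m + 1)) :=
  Finset.prod_range_succ _ m

lemma qPoch_add (a q : ℂ) (m n : ℕ) :
    qPoch a q (m + n) = qPoch a q m * qPoch (a * q ^ m) q n := by
  unfold qPoch
  rw [Finset.prod_range_add]
  congr 1
  apply Finset.prod_congr rfl
  intro j _
  rw [pow_add]; ring

lemma one_sub_ne {q : ℂ} (hq : ‖q‖ < 1) (j : ℕ) : 1 - q * q ^ j ≠ 0 := by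
  rw [sub_ne_zero]
  intro h
  have h1 : ‖q * q ^ j‖ < 1 := by
    rw [norm_mul, norm_pow]
    calc ‖q‖ * ‖q‖ ^ j ≤ ‖q‖ * 1 := by
          apply mul_le_mul_of_nonneg_left (pow_le_one₀ (norm_nonneg q) hq.le) (norm_nonneg q)
      _ < 1 := by simpa using hq
  rw [← h] at h1
  simp at h1

lemma qPoch_q_ne_zero {q : ℂ} (hq : ‖q‖ < 1) (n : ℕ) : qPoch q q n ≠ 0 := by
  unfold qPoch
  rw [Finset.prod_ne_zero_iff]
  intro j _
  exact one_sub_ne hq j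

lemma Bq_zero {q : ℂ} (hq : ‖q‖ < 1) (n : ℕ) : Bq q n 0 = 1 := by
  unfold Bq
  rw [if_pos (Nat.zero_le n), qPoch_zero]
  simp [div_self (qPoch_q_ne_zero hq n)]

lemma Bq_self {q : ℂ} (hq : ‖q‖ < 1) (n : ℕ) : Bq q n n = 1 := by
  unfold Bq
  rw [if_pos le_rfl, Nat.sub_self, qPoch_zero]
  simp [div_self (qPoch_q_ne_zero hq n)]

lemma Bq_gt (q : ℂ) {n k : ℕ} (h : n < k) : Bq q n k = 0 := by
  unfold Bq
  rw [if_neg (by omega)]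

lemma pascal1 {q : ℂ} (hq : ‖q‖ < 1) (n i : ℕ) :
    Bq q (n + 1) (i + 1) = q ^ (i + 1) * Bq q n (i + 1) + Bq q n i := by
  rcases lt_trichotomy i n with h | rfl | h
  · obtain ⟨d, rfl⟩ : ∃ d, n = i + 1 + d := ⟨n - (i + 1), by omega⟩
    unfold Bq
    rw [if_pos (by omega), if_pos (by omega), if_pos (by omega)]
    have e1 : i + 1 + d + 1 - (i + 1) = d + 1 := by omega
    have e2 : i + 1 + d - (i + 1) = d := by omega
    have e3 : i + 1 + d - i = d + 1 := by omega
    rw [e1, e2, e3]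
    rw [show i + 1 + d + 1 = (i + 1 + d) + 1 from rfl, qPoch_succ q q (i + 1 + d),
        qPoch_succ q q d, qPoch_succ q q i]
    have hA := qPoch_q_ne_zero hq i
    have hD := qPoch_q_ne_zero hq d
    have f1 := one_sub_ne hq i
    have f2 := one_sub_ne hq d
    field_simp
    ring
  · rw [Bq_self hq, Bq_gt q (by omega), Bq_self hq]
    ring
  · rw [Bq_gt q (by omega), Bq_gt q (by omega), Bq_gt q (by omega)]
    ring

lemma pascal2 {q : ℂ} (hq : ‖q‖ < 1) (n i : ℕ) :
    Bq q (n + 1) (i + 1) = Bq q n (i + 1) + q ^ (n - i) * Bq q n i := by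
  rcases lt_trichotomy i n with h | rfl | h
  · obtain ⟨d, rfl⟩ : ∃ d, n = i + 1 + d := ⟨n - (i + 1), by omega⟩
    unfold Bq
    rw [if_pos (by omega), if_pos (by omega), if_pos (by omega)]
    have e1 : i + 1 + d + 1 - (i + 1) = d + 1 := by omega
    have e2 : i + 1 + d - (i + 1) = d := by omega
    have e3 : i + 1 + d - i = d + 1 := by omega
    rw [e1, e2, e3]
    rw [show i + 1 + d + 1 = (i + 1 + d) + 1 from rfl, qPoch_succ q q (i + 1 + d),
        qPoch_succ q q d, qPoch_succ q q i]
    have hA := qPoch_q_ne_zero hq i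
    have hD := qPoch_q_ne_zero hq d
    have f1 := one_sub_ne hq i
    have f2 := one_sub_ne hq d
    field_simp
    ring
  · rw [Bq_self hq, Bq_gt q (by omega), Bq_self hq, Nat.sub_self]
    ring
  · rw [Bq_gt q (by omega), Bq_gt q (by omega), Bq_gt q (by omega)]
    ring

lemma SG {q : ℂ} (hq : ‖q‖ < 1) (a : ℂ) (M : ℕ) :
    ∑ i ∈ range (M + 1), q ^ (M - i) * Bq q M i * qPoch (a * q) q i * Pprod a q (M - i)
      = ∏ j ∈ range M, (1 - q ^ (j + 2)) := by
  induction M with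
  | zero => simp [Bq_zero hq, qPoch_zero, Pprod_zero]
  | succ M ih =>
    have hA : ∑ i ∈ range (M + 2), Bq q M i * qPoch (a * q) q i * Pprod a q (M + 1 - i)
        = (∑ i ∈ range (M + 1),
            Bq q M (i + 1) * qPoch (a * q) q (i + 1) * Pprod a q (M + 1 - (i + 1)))
          + Pprod a q (M + 1) := by
      rw [Finset.sum_range_succ'
        (fun i => Bq q M i * qPoch (a * q) q i * Pprod a q (M + 1 - i)) (M + 1)]
      simp [Bq_zero hq, qPoch_zero]
    have hB : ∑ i ∈ range (M + 2), Bq q M i * qPoch (a * q) q i * Pprod a q (M + 1 - i)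
        = ∑ i ∈ range (M + 1),
            Bq q M i * qPoch (a * q) q i * (Pprod a q (M - i) * (a - q ^ (M - i + 1))) := by
      rw [Finset.sum_range_succ]
      rw [Bq_gt q (by omega)]
      simp only [zero_mul, mul_zero, add_zero]
      apply Finset.sum_congr rfl
      intro i hi
      simp only [mem_range] at hi
      rw [show M + 1 - i = (M - i) + 1 by omega, Pprod_succ]
    calc
      ∑ i ∈ range (M + 1 + 1),
          q ^ (M + 1 - i) * Bq q (M + 1) i * qPoch (a * q) q i * Pprod a q (M + 1 - i)
        = (∑ i ∈ range (M + 1),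
              (q ^ (M + 1) * (Bq q M (i + 1) * qPoch (a * q) q (i + 1)
                  * Pprod a q (M + 1 - (i + 1)))
                + q ^ (M - i) * Bq q M i * qPoch (a * q) q i * (1 - (a * q) * q ^ i)
                  * Pprod a q (M - i)))
          + q ^ (M + 1) * Pprod a q (M + 1) := by
          rw [Finset.sum_range_succ'
            (fun i => q ^ (M + 1 - i) * Bq q (M + 1) i * qPoch (a * q) q i
              * Pprod a q (M + 1 - i)) (M + 1)]
          congr 1
          · apply Finset.sum_congr rfl
            intro i hi
            simp only [mem_range] at hi
            obtain ⟨d, rfl⟩ : ∃ d, M = i + d := ⟨M - i, by omega⟩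
            rw [pascal1 hq, qPoch_succ]
            rw [show i + d + 1 - (i + 1) = d by omega, show i + d - i = d by omega]
            ring
          · rw [Bq_zero hq, qPoch_zero]
            simp
      _ = q ^ (M + 1) * (∑ i ∈ range (M + 2),
              Bq q M i * qPoch (a * q) q i * Pprod a q (M + 1 - i))
          + ∑ i ∈ range (M + 1), q ^ (M - i) * Bq q M i * qPoch (a * q) q i
              * (1 - (a * q) * q ^ i) * Pprod a q (M - i) := by
          rw [Finset.sum_add_distrib, ← Finset.mul_sum, hA]
          ring
      _ = ∑ i ∈ range (M + 1),
            (q ^ (M + 1) * (Bq q M i * qPoch (a * q) q i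
                * (Pprod a q (M - i) * (a - q ^ (M - i + 1))))
              + q ^ (M - i) * Bq q M i * qPoch (a * q) q i * (1 - (a * q) * q ^ i)
                * Pprod a q (M - i)) := by
          rw [hB, Finset.mul_sum, ← Finset.sum_add_distrib]
      _ = (1 - q ^ (M + 2)) * ∑ i ∈ range (M + 1),
            q ^ (M - i) * Bq q M i * qPoch (a * q) q i * Pprod a q (M - i) := by
          rw [Finset.mul_sum]
          apply Finset.sum_congr rfl
          intro i hi
          simp only [mem_range] at hi
          obtain ⟨d, rfl⟩ : ∃ d, M = i + d := ⟨M - i, by omega⟩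
          rw [show i + d - i = d by omega]
          ring
      _ = ∏ j ∈ range (M + 1), (1 - q ^ (j + 2)) := by
          rw [ih, Finset.prod_range_succ]
          ring

lemma qPoch_q_succ' {q : ℂ} (M : ℕ) :
    qPoch q q (M + 1) = (∏ j ∈ range M, (1 - q ^ (j + 2))) * (1 - q) := by
  unfold qPoch
  rw [Finset.prod_range_succ' (fun j => 1 - q * q ^ j) M]
  congr 1
  · apply Finset.prod_congr rfl
    intro j _
    congr 1
    ring
  · simp

lemma SF {q : ℂ} (hq : ‖q‖ < 1) (a : ℂ) (M : ℕ) :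
    ∑ i ∈ range (M + 1), Bq q M i * qPoch (a * q) q i * Pprod a q (M - i)
      = qPoch q q M * ∑ j ∈ range (M + 1), a ^ j := by
  induction M with
  | zero => simp [Bq_zero hq, qPoch_zero, Pprod_zero]
  | succ M ih =>
    have hA : ∑ i ∈ range (M + 2), Bq q M i * qPoch (a * q) q i * Pprod a q (M + 1 - i)
        = (∑ i ∈ range (M + 1),
            Bq q M (i + 1) * qPoch (a * q) q (i + 1) * Pprod a q (M + 1 - (i + 1)))
          + Pprod a q (M + 1) := by
      rw [Finset.sum_range_succ'
        (fun i => Bq q M i * qPoch (a * q) q i * Pprod a q (M + 1 - i)) (M + 1)]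
      simp [Bq_zero hq, qPoch_zero]
    have hB : ∑ i ∈ range (M + 2), Bq q M i * qPoch (a * q) q i * Pprod a q (M + 1 - i)
        = ∑ i ∈ range (M + 1),
            Bq q M i * qPoch (a * q) q i * (Pprod a q (M - i) * (a - q ^ (M - i + 1))) := by
      rw [Finset.sum_range_succ]
      rw [Bq_gt q (by omega)]
      simp only [zero_mul, mul_zero, add_zero]
      apply Finset.sum_congr rfl
      intro i hi
      simp only [mem_range] at hi
      rw [show M + 1 - i = (M - i) + 1 by omega, Pprod_succ]
    calc
      ∑ i ∈ range (M + 1 + 1),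
          Bq q (M + 1) i * qPoch (a * q) q i * Pprod a q (M + 1 - i)
        = (∑ i ∈ range (M + 1),
              (Bq q M (i + 1) * qPoch (a * q) q (i + 1) * Pprod a q (M + 1 - (i + 1))
                + q ^ (M - i) * Bq q M i * qPoch (a * q) q i * (1 - (a * q) * q ^ i)
                  * Pprod a q (M - i)))
          + Pprod a q (M + 1) := by
          rw [Finset.sum_range_succ'
            (fun i => Bq q (M + 1) i * qPoch (a * q) q i * Pprod a q (M + 1 - i)) (M + 1)]
          congr 1
          · apply Finset.sum_congr rfl
            intro i hi
            simp only [mem_range] at hi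
            rw [pascal2 hq, qPoch_succ, show M + 1 - (i + 1) = M - i by omega]
            ring
          · rw [Bq_zero hq, qPoch_zero]
            simp
      _ = (∑ i ∈ range (M + 2), Bq q M i * qPoch (a * q) q i * Pprod a q (M + 1 - i))
          + ∑ i ∈ range (M + 1), q ^ (M - i) * Bq q M i * qPoch (a * q) q i
              * (1 - (a * q) * q ^ i) * Pprod a q (M - i) := by
          rw [Finset.sum_add_distrib, hA]
          ring
      _ = ∑ i ∈ range (M + 1),
            (a * (1 - q * q ^ M) * (Bq q M i * qPoch (a * q) q i * Pprod a q (M - i))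
              + (1 - q) * (q ^ (M - i) * Bq q M i * qPoch (a * q) q i * Pprod a q (M - i))) := by
          rw [hB, ← Finset.sum_add_distrib]
          apply Finset.sum_congr rfl
          intro i hi
          simp only [mem_range] at hi
          obtain ⟨d, rfl⟩ : ∃ d, M = i + d := ⟨M - i, by omega⟩
          rw [show i + d - i = d by omega]
          ring
      _ = a * (1 - q * q ^ M) * (qPoch q q M * ∑ j ∈ range (M + 1), a ^ j)
          + (1 - q) * ∏ j ∈ range M, (1 - q ^ (j + 2)) := by
          rw [Finset.sum_add_distrib, ← Finset.mul_sum, ← Finset.mul_sum, ih, SG hq]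
      _ = qPoch q q (M + 1) * ∑ j ∈ range (M + 1 + 1), a ^ j := by
          have h1 : (1 - q) * ∏ j ∈ range M, (1 - q ^ (j + 2)) = qPoch q q (M + 1) := by
            rw [qPoch_q_succ']; ring
          have h2 : ∑ j ∈ range (M + 1 + 1), a ^ j = a * ∑ j ∈ range (M + 1), a ^ j + 1 :=
            _root_.geom_sum_succ
          rw [h2, h1, qPoch_succ]
          ring

lemma q_pow_ne_one {q : ℂ} (hq : ‖q‖ < 1) {n : ℕ} (hn : n ≠ 0) : q ^ n ≠ 1 := by
  intro h
  have h1 : ‖q ^ n‖ < 1 := by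
    rw [norm_pow]
    exact pow_lt_one₀ (norm_nonneg q) hq (by omega)
  rw [h] at h1
  simp at h1

lemma q_zpow_ne_one {q : ℂ} (hq : ‖q‖ < 1) (hq0 : q ≠ 0) {z : ℤ} (hz : z ≠ 0) :
    q ^ z ≠ 1 := by
  intro h
  rcases lt_trichotomy z 0 with hlt | rfl | hgt
  · have h2 : q ^ ((-z).toNat) = 1 := by
      have hz2 : ((-z).toNat : ℤ) = -z := by omega
      rw [← zpow_natCast q, hz2, zpow_neg, h, inv_one]
    exact q_pow_ne_one hq (by omega) h2
  · exact hz rfl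
  · have h2 : q ^ (z.toNat) = 1 := by
      have hz2 : (z.toNat : ℤ) = z := by omega
      rw [← zpow_natCast q, hz2, h]
    exact q_pow_ne_one hq (by omega) h2

lemma qPoch_qneg_ne_zero {q : ℂ} (hq : ‖q‖ < 1) (hq0 : q ≠ 0) (N : ℕ) :
    qPoch (q ^ (-(N : ℤ))) q N ≠ 0 := by
  unfold qPoch
  rw [Finset.prod_ne_zero_iff]
  intro j hj
  simp only [mem_range] at hj
  rw [sub_ne_zero]
  intro h
  have h1 : q ^ ((j : ℤ) - N) = 1 := by
    rw [sub_eq_add_neg, zpow_add₀ hq0, zpow_natCast]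
    linear_combination -h
  exact q_zpow_ne_one hq hq0 (by omega) h1

lemma alg1 (C Qi Pi Ai PN Pm Qm P : ℂ) (hPi : Pi ≠ 0) (hAi : Ai ≠ 0) (hPN : PN ≠ 0)
    (hPm : Pm ≠ 0) (hQm : Qm ≠ 0) (hP : P ≠ 0) :
    C * Qi / (Pi * Ai) = PN / (Pi * Pm) * C * P * (Qi * Qm / (PN * (Ai * (Qm * P / Pm)))) := by
  have e1 : PN * (Ai * (Qm * P / Pm)) = PN * Ai * Qm * P / Pm := by ring
  have e2 : PN / (Pi * Pm) * C * P * (Qi * Qm * Pm / (PN * Ai * Qm * P))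
      = PN * C * P * (Qi * Qm * Pm) / (Pi * Pm * (PN * Ai * Qm * P)) := by
    rw [div_mul_eq_mul_div, div_mul_eq_mul_div, div_mul_div_comm]
  rw [e1, div_div_eq_mul_div, e2,
    div_eq_div_iff (mul_ne_zero hPi hAi)
      (mul_ne_zero (mul_ne_zero hPi hPm)
        (mul_ne_zero (mul_ne_zero (mul_ne_zero hPN hAi) hQm) hP))]
  ring
lemma alg2 (X PN QN AN : ℂ) (hPN : PN ≠ 0) (hAN : AN ≠ 0) :
    PN * X * (QN / (PN * AN)) = X * (QN / AN) := by
  field_simp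

lemma key_prod {q : ℂ} (hq0 : q ≠ 0) (a : ℂ) (m : ℕ) :
    qPoch (a * q ^ (-(m : ℤ))) q m * qPoch q q m
      = qPoch (q ^ (-(m : ℤ))) q m * Pprod a q m := by
  unfold qPoch Pprod
  rw [← Finset.prod_range_reflect (fun j => (1 - q * q ^ j)) m,
      ← Finset.prod_range_reflect (fun j => (a - q ^ (j + 1))) m,
      ← Finset.prod_mul_distrib, ← Finset.prod_mul_distrib]
  apply Finset.prod_congr rfl
  intro j hj
  simp only [mem_range] at hj
  have h2 : q * q ^ (m - 1 - j) = q ^ (m - j) := by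
    rw [show m - j = (m - 1 - j) + 1 by omega, pow_succ']
  have hv : (q ^ (-(m : ℤ)) * q ^ j) * (q * q ^ (m - 1 - j)) = 1 := by
    rw [h2, ← zpow_natCast q j, ← zpow_natCast q (m - j),
        ← zpow_add₀ hq0, ← zpow_add₀ hq0]
    rw [show (-(m : ℤ) + j + (m - j : ℕ)) = 0 by omega, zpow_zero]
  have he : q ^ (m - 1 - j + 1) = q * q ^ (m - 1 - j) := by
    rw [pow_succ]; ring
  rw [he]
  linear_combination (a - 1) * hv

theorem stmt_7 (q a : ℂ) (N : ℕ) (hq : ‖q‖ < 1) (hq0 : q ≠ 0) (ha1 : a ≠ 1)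
    (ha : qPoch (a * q ^ (-(N : ℤ))) q N ≠ 0) :
    ∑ i ∈ Finset.range (N + 1),
        qPoch (a * q) q i * qPoch (q ^ (-(N : ℤ))) q i /
          (qPoch q q i * qPoch (a * q ^ (-(N : ℤ))) q i) =
      (1 - a ^ (N + 1)) / (1 - a) *
        (qPoch (q ^ (-(N : ℤ))) q N / qPoch (a * q ^ (-(N : ℤ))) q N) := by
  have hPN := qPoch_q_ne_zero hq N
  have hQN := qPoch_qneg_ne_zero hq hq0 N
  have hterm : ∀ i ∈ Finset.range (N + 1),
      qPoch (a * q) q i * qPoch (q ^ (-(N : ℤ))) q i /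
          (qPoch q q i * qPoch (a * q ^ (-(N : ℤ))) q i)
        = Bq q N i * qPoch (a * q) q i * Pprod a q (N - i) *
            (qPoch (q ^ (-(N : ℤ))) q N /
              (qPoch q q N * qPoch (a * q ^ (-(N : ℤ))) q N)) := by
    intro i hi
    simp only [mem_range] at hi
    have hiN : i ≤ N := by omega
    set m := N - i with hm
    have hNim : N = i + m := by omega
    have hbase1 : q ^ (-(N : ℤ)) * q ^ i = q ^ (-(m : ℤ)) := by
      rw [← zpow_natCast q i, ← zpow_add₀ hq0]
      congr 1
      omega
    have h2' : qPoch (a * q ^ (-(N : ℤ))) q N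
        = qPoch (a * q ^ (-(N : ℤ))) q i * qPoch ((a * q ^ (-(N : ℤ))) * q ^ i) q m := by
      have h := qPoch_add (a * q ^ (-(N : ℤ))) q i m
      rwa [← hNim] at h
    have hsplit2 : qPoch (a * q ^ (-(N : ℤ))) q N
        = qPoch (a * q ^ (-(N : ℤ))) q i * qPoch (a * q ^ (-(m : ℤ))) q m := by
      rw [h2', mul_assoc, hbase1]
    have h1' : qPoch (q ^ (-(N : ℤ))) q N
        = qPoch (q ^ (-(N : ℤ))) q i * qPoch ((q ^ (-(N : ℤ))) * q ^ i) q m := by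
      have h := qPoch_add (q ^ (-(N : ℤ))) q i m
      rwa [← hNim] at h
    have hsplit1 : qPoch (q ^ (-(N : ℤ))) q N
        = qPoch (q ^ (-(N : ℤ))) q i * qPoch (q ^ (-(m : ℤ))) q m := by
      rw [h1', hbase1]
    have hAi : qPoch (a * q ^ (-(N : ℤ))) q i ≠ 0 := by
      intro h0; apply ha; rw [hsplit2, h0, zero_mul]
    have hAm : qPoch (a * q ^ (-(m : ℤ))) q m ≠ 0 := by
      intro h0; apply ha; rw [hsplit2, h0, mul_zero]
    have hPi := qPoch_q_ne_zero hq i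
    have hPm := qPoch_q_ne_zero hq m
    have hAmeq : qPoch (a * q ^ (-(m : ℤ))) q m
        = qPoch (q ^ (-(m : ℤ))) q m * Pprod a q m / qPoch q q m := by
      rw [eq_div_iff hPm]
      exact key_prod hq0 a m
    have hQm := qPoch_qneg_ne_zero hq hq0 m
    have hPprod : Pprod a q m ≠ 0 := by
      intro h0
      apply hAm
      rw [hAmeq, h0, mul_zero, zero_div]
    rw [hsplit1, hsplit2, hAmeq]
    simp only [Bq, if_pos hiN, ← hm]
    exact alg1 _ _ _ _ _ _ _ _ hPi hAi hPN hPm hQm hPprod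
  rw [Finset.sum_congr rfl hterm, ← Finset.sum_mul, SF hq a N, geom_sum_eq ha1]
  have h1a : (1 : ℂ) - a ≠ 0 := sub_ne_zero.mpr (Ne.symm ha1)
  have ha1' : a - 1 ≠ 0 := sub_ne_zero.mpr ha1
  have hgeom : (a ^ (N + 1) - 1) / (a - 1) = (1 - a ^ (N + 1)) / (1 - a) := by
    rw [div_eq_div_iff ha1' h1a]
    ring
  rw [hgeom]
  exact alg2 _ _ _ _ hPN ha
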